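/- arXiv:1105.2690 — 5 statements merged into one kernel-verified Lean document; each statement's English description precedes it below -/
import Mathlib

section
/- Let φ : (0,∞) → (0,∞) be increasing with t ↦ φ(t)/√t monotonically decreasing, and define ϑ(t) = √t · φ(t). Then for every C > 0 and every t > 0 in the relevant domain, φ(ϑ⁻¹(C t)) ≤ max{√C, 1} · φ(ϑ⁻¹(t)). -/
theorem stmt5 (φ : ℝ → ℝ) (hmono : StrictMonoOn φ (Set.Ioi 0))
    (hpos : ∀ t : ℝ, 0 < t → 0 < φ t)
    (hdec : ∀ s t : ℝ, 0 < s → s ≤ t → φ t / Real.sqrt t ≤ φ s / Real.sqrt s)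
    (C t s s' : ℝ) (hC : 0 < C) (ht : 0 < t) (hs : 0 < s) (hs' : 0 < s')
    (hϑ : Real.sqrt s * φ s = C * t) (hϑ' : Real.sqrt s' * φ s' = t) :
    φ s ≤ max (Real.sqrt C) 1 * φ s' := by
  have hφs := hpos s hs
  have hφs' := hpos s' hs'
  have hsqs : 0 < Real.sqrt s := Real.sqrt_pos.mpr hs
  have hsqs' : 0 < Real.sqrt s' := Real.sqrt_pos.mpr hs'
  rcases le_or_gt C 1 with hC1 | hC1
  · -- then s ≤ s', so φ s ≤ φ s'
    have hle : s ≤ s' := by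
      by_contra h
      push_neg at h
      have h1 : Real.sqrt s' < Real.sqrt s := Real.sqrt_lt_sqrt hs'.le h
      have h2 : φ s' < φ s := hmono (Set.mem_Ioi.mpr hs') (Set.mem_Ioi.mpr hs) h
      have h3 : Real.sqrt s' * φ s' < Real.sqrt s * φ s :=
        mul_lt_mul h1 h2.le hφs' (Real.sqrt_nonneg s)
      nlinarith
    have h4 : φ s ≤ φ s' := hmono.monotoneOn (Set.mem_Ioi.mpr hs) (Set.mem_Ioi.mpr hs') hle
    have h5 : (1 : ℝ) ≤ max (Real.sqrt C) 1 := le_max_right _ _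
    nlinarith
  · -- C > 1: s' < s
    have hlt : s' < s := by
      by_contra h
      push_neg at h
      have h1 : Real.sqrt s ≤ Real.sqrt s' := Real.sqrt_le_sqrt h
      have h2 : φ s ≤ φ s' := hmono.monotoneOn (Set.mem_Ioi.mpr hs) (Set.mem_Ioi.mpr hs') h
      have h3 : Real.sqrt s * φ s ≤ Real.sqrt s' * φ s' :=
        mul_le_mul h1 h2 hφs.le (Real.sqrt_nonneg s')
      nlinarith
    have hd := hdec s' s hs' hlt.le
    have hd' : φ s * Real.sqrt s' ≤ φ s' * Real.sqrt s :=
      (div_le_div_iff₀ hsqs hsqs').mp hd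
    have hsq : φ s ^ 2 ≤ C * φ s' ^ 2 := by
      nlinarith [mul_le_mul_of_nonneg_left hd' hφs.le, mul_pos hsqs' hφs', hsqs']
    have hsqC : Real.sqrt C ^ 2 = C := Real.sq_sqrt hC.le
    have hmax : max (Real.sqrt C) 1 = Real.sqrt C := max_eq_left (by
      rw [show (1:ℝ) = Real.sqrt 1 by simp]
      exact Real.sqrt_le_sqrt hC1.le)
    rw [hmax]
    nlinarith [Real.sqrt_nonneg C, mul_pos (Real.sqrt_pos.mpr hC) hφs']
end

section
/- Let φ : (0,∞) → (0,∞) be increasing with t ↦ φ(t)/√t monotonically decreasing, and define Θ(t) = t·φ(t)². Then for every C > 0 and t > 0 in the relevant domain, φ(Θ⁻¹(C t))² ≤ max{√C, 1} · φ(Θ⁻¹(t))². -/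
theorem stmt6 (φ : ℝ → ℝ) (hmono : StrictMonoOn φ (Set.Ioi 0))
    (hpos : ∀ t : ℝ, 0 < t → 0 < φ t)
    (hdec : ∀ s t : ℝ, 0 < s → s ≤ t → φ t / Real.sqrt t ≤ φ s / Real.sqrt s)
    (C t s s' : ℝ) (hC : 0 < C) (ht : 0 < t) (hs : 0 < s) (hs' : 0 < s')
    (hΘ : s * φ s ^ 2 = C * t) (hΘ' : s' * φ s' ^ 2 = t) :
    φ s ^ 2 ≤ max (Real.sqrt C) 1 * φ s' ^ 2 := by
  have hps := hpos s hs
  have hps' := hpos s' hs'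
  rcases le_or_gt C 1 with hC1 | hC1
  · -- C ≤ 1 : then s ≤ s'
    have hle : s * φ s ^ 2 ≤ s' * φ s' ^ 2 := by
      rw [hΘ, hΘ']; nlinarith
    have hss' : s ≤ s' := by
      by_contra h
      push_neg at h
      have hφ : φ s' < φ s := hmono (Set.mem_Ioi.2 hs') (Set.mem_Ioi.2 hs) h
      have h1 : φ s' ^ 2 < φ s ^ 2 := by nlinarith
      have h2 : s' * φ s' ^ 2 < s * φ s ^ 2 :=
        calc s' * φ s' ^ 2 < s' * φ s ^ 2 := by nlinarith
          _ < s * φ s ^ 2 := by nlinarith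
      linarith
    have hφ : φ s ≤ φ s' := by
      rcases eq_or_lt_of_le hss' with h | h
      · exact le_of_eq (by rw [h])
      · exact (hmono (Set.mem_Ioi.2 hs) (Set.mem_Ioi.2 hs') h).le
    have h1 : (1:ℝ) ≤ max (Real.sqrt C) 1 := le_max_right _ _
    have h2 : φ s ^ 2 ≤ φ s' ^ 2 := by nlinarith
    calc φ s ^ 2 ≤ φ s' ^ 2 := h2
      _ = 1 * φ s' ^ 2 := (one_mul _).symm
      _ ≤ max (Real.sqrt C) 1 * φ s' ^ 2 :=
          mul_le_mul_of_nonneg_right h1 (by positivity)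
  · -- C > 1 : then s' ≤ s
    have hle : s' * φ s' ^ 2 ≤ s * φ s ^ 2 := by
      rw [hΘ, hΘ']; nlinarith
    have hss' : s' ≤ s := by
      by_contra h
      push_neg at h
      have hφ : φ s < φ s' := hmono (Set.mem_Ioi.2 hs) (Set.mem_Ioi.2 hs') h
      have h1 : φ s ^ 2 < φ s' ^ 2 := by nlinarith
      have h2 : s * φ s ^ 2 < s' * φ s' ^ 2 :=
        calc s * φ s ^ 2 < s * φ s' ^ 2 := by nlinarith
          _ < s' * φ s' ^ 2 := by nlinarith
      linarith
    have hd := hdec s' s hs' hss'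
    have hsqs : Real.sqrt s > 0 := Real.sqrt_pos.2 hs
    have hsqs' : Real.sqrt s' > 0 := Real.sqrt_pos.2 hs'
    have hsq : φ s ^ 2 / s ≤ φ s' ^ 2 / s' := by
      have h2 : (φ s / Real.sqrt s) ^ 2 ≤ (φ s' / Real.sqrt s') ^ 2 := by
        apply pow_le_pow_left₀ (by positivity) hd 2
      rwa [div_pow, div_pow, Real.sq_sqrt hs.le, Real.sq_sqrt hs'.le] at h2
    -- φ s ^ 4 ≤ C * φ s' ^ 4
    have h4 : φ s ^ 2 * φ s ^ 2 ≤ C * (φ s' ^ 2 * φ s' ^ 2) := by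
      have e1 : φ s ^ 2 * φ s ^ 2 = (s * φ s ^ 2) * (φ s ^ 2 / s) := by
        field_simp
      have e2 : φ s' ^ 2 * φ s' ^ 2 = (s' * φ s' ^ 2) * (φ s' ^ 2 / s') := by
        field_simp
      rw [e1, e2, hΘ, hΘ']
      have : φ s ^ 2 / s ≥ 0 := by positivity
      calc C * t * (φ s ^ 2 / s) ≤ C * t * (φ s' ^ 2 / s') := by
            apply mul_le_mul_of_nonneg_left hsq (by positivity)
        _ = C * (t * (φ s' ^ 2 / s')) := by ring
    have hsC : Real.sqrt C ^ 2 = C := Real.sq_sqrt hC.le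
    have hsCpos : 0 < Real.sqrt C := Real.sqrt_pos.2 hC
    have key : φ s ^ 2 ≤ Real.sqrt C * φ s' ^ 2 := by
      by_contra hk
      push_neg at hk
      have hb : 0 < Real.sqrt C * φ s' ^ 2 := by positivity
      have hmm : (Real.sqrt C * φ s' ^ 2) * (Real.sqrt C * φ s' ^ 2)
          < φ s ^ 2 * φ s ^ 2 := mul_lt_mul'' hk hk hb.le hb.le
      nlinarith
    calc φ s ^ 2 ≤ Real.sqrt C * φ s' ^ 2 := key
      _ ≤ max (Real.sqrt C) 1 * φ s' ^ 2 := by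
          apply mul_le_mul_of_nonneg_right (le_max_left _ _) (by positivity)
end

section
/- Let Y be a normed space, r ∈ [1,∞), and F : B → Y satisfy ‖F(u) + F'(u; v−u) − F(v)‖ ≤ η̄ ‖F(u) − F(v)‖ for all u, v ∈ B. Then for all u, v ∈ B and all g ∈ Y: ‖F(u) + F'(u; v−u) − g‖^r ≥ (2^(1−r) − 2^(r−1) η̄^r) ‖F(v) − g‖^r − 2^(r−1) η̄^r ‖F(u) − g‖^r. -/
lemma two_rpow_helper {x y p : ℝ} (hx : 0 ≤ x) (hy : 0 ≤ y) (hp : 1 ≤ p) :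
    (x + y) ^ p ≤ 2 ^ (p - 1) * (x ^ p + y ^ p) := by
  lift x to NNReal using hx
  lift y to NNReal using hy
  exact_mod_cast NNReal.rpow_add_le_mul_rpow_add_rpow x y hp

theorem stmt11 {X Y : Type*} [NormedAddCommGroup X] [NormedAddCommGroup Y]
    (B : Set X) (F : X → Y) (F' : X → X → Y) (r ηb : ℝ) (hr : 1 ≤ r) (hη : 0 ≤ ηb)
    (htc : ∀ u ∈ B, ∀ v ∈ B, ‖F u + F' u (v - u) - F v‖ ≤ ηb * ‖F u - F v‖)
    (u v : X) (hu : u ∈ B) (hv : v ∈ B) (g : Y) :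
    (2 ^ (1 - r) - 2 ^ (r - 1) * ηb ^ r) * ‖F v - g‖ ^ r
        - 2 ^ (r - 1) * ηb ^ r * ‖F u - g‖ ^ r
      ≤ ‖F u + F' u (v - u) - g‖ ^ r := by
  set a := ‖F u + F' u (v - u) - g‖ with ha
  set c := ‖F u + F' u (v - u) - F v‖ with hc
  set s := ‖F u - g‖ with hs
  set t := ‖F v - g‖ with ht
  have hr0 : 0 ≤ r := by linarith
  have h1 : t ≤ a + c := by
    have : F v - g = (F u + F' u (v - u) - g) - (F u + F' u (v - u) - F v) := by abel
    rw [ht, this]; exact norm_sub_le _ _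
  have h2 : ‖F u - F v‖ ≤ s + t := by
    have : F u - F v = (F u - g) - (F v - g) := by abel
    rw [this]; exact norm_sub_le _ _
  have hcst : c ≤ ηb * (s + t) :=
    le_trans (htc u hu v hv) (mul_le_mul_of_nonneg_left h2 hη)
  have k1 : t ^ r ≤ 2 ^ (r - 1) * (a ^ r + c ^ r) :=
    le_trans (Real.rpow_le_rpow (norm_nonneg _) h1 hr0)
      (two_rpow_helper (norm_nonneg _) (norm_nonneg _) hr)
  have k2 : c ^ r ≤ ηb ^ r * (2 ^ (r - 1) * (s ^ r + t ^ r)) := by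
    calc c ^ r ≤ (ηb * (s + t)) ^ r := Real.rpow_le_rpow (norm_nonneg _) hcst hr0
      _ = ηb ^ r * (s + t) ^ r := Real.mul_rpow hη (by positivity)
      _ ≤ ηb ^ r * (2 ^ (r - 1) * (s ^ r + t ^ r)) :=
          mul_le_mul_of_nonneg_left (two_rpow_helper (norm_nonneg _) (norm_nonneg _) hr)
            (Real.rpow_nonneg hη r)
  have hpos : (0:ℝ) < 2 ^ (1 - r) := Real.rpow_pos_of_pos (by norm_num) _
  have hmul : (2:ℝ) ^ (1 - r) * 2 ^ (r - 1) = 1 := by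
    rw [← Real.rpow_add (by norm_num)]; norm_num
  have k1' : 2 ^ (1 - r) * t ^ r ≤ a ^ r + c ^ r := by
    have := mul_le_mul_of_nonneg_left k1 hpos.le
    calc 2 ^ (1 - r) * t ^ r ≤ 2 ^ (1 - r) * (2 ^ (r - 1) * (a ^ r + c ^ r)) := this
      _ = (2 ^ (1 - r) * 2 ^ (r - 1)) * (a ^ r + c ^ r) := by ring
      _ = a ^ r + c ^ r := by rw [hmul]; ring
  nlinarith [k1', k2]
end

section
/- Suppose nonnegative sequences Φ_nl, Φ_app, Φ_noi indexed by n ≥ 1 satisfy Φ_nl(n+1) ≤ γ̄ (Φ_nl(n) + Φ_app(n) + Φ_noi(n)) for all n ≥ 1, Φ_app(n) ≤ C² Φ_app(n+1) and Φ_noi(n) ≤ C² Φ_noi(n+1) for all n (with C ≥ 1), C² γ̄ < 1, and define γ := max{ C² γ̄/(1 − C² γ̄), Φ_nl(1)/(Φ_app(1) + Φ_noi(1)) } (with Φ_app(1)+Φ_noi(1) > 0). Then Φ_nl(n) ≤ γ (Φ_app(n) + Φ_noi(n)) for all n ≥ 1. -/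
theorem stmt18 (Φnl Φapp Φnoi : ℕ → ℝ) (γb C γ : ℝ)
    (hnl : ∀ n, 1 ≤ n → 0 ≤ Φnl n) (happ : ∀ n, 1 ≤ n → 0 ≤ Φapp n)
    (hnoi : ∀ n, 1 ≤ n → 0 ≤ Φnoi n)
    (hγb : 0 ≤ γb) (hC : 1 ≤ C) (hsmall : C ^ 2 * γb < 1)
    (hrec : ∀ n, 1 ≤ n → Φnl (n + 1) ≤ γb * (Φnl n + Φapp n + Φnoi n))
    (happ' : ∀ n, 1 ≤ n → Φapp n ≤ C ^ 2 * Φapp (n + 1))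
    (hnoi' : ∀ n, 1 ≤ n → Φnoi n ≤ C ^ 2 * Φnoi (n + 1))
    (hpos1 : 0 < Φapp 1 + Φnoi 1)
    (hγ : γ = max (C ^ 2 * γb / (1 - C ^ 2 * γb)) (Φnl 1 / (Φapp 1 + Φnoi 1))) :
    ∀ n, 1 ≤ n → Φnl n ≤ γ * (Φapp n + Φnoi n) := by
  have ha : 0 ≤ C ^ 2 * γb := by positivity
  have h1a : 0 < 1 - C ^ 2 * γb := by linarith
  have hγ0 : 0 ≤ γ := by
    rw [hγ]
    exact le_max_of_le_left (by positivity)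
  have hkey : C ^ 2 * γb * (1 + γ) ≤ γ := by
    have h1 : C ^ 2 * γb / (1 - C ^ 2 * γb) ≤ γ := hγ ▸ le_max_left _ _
    rw [div_le_iff₀ h1a] at h1
    nlinarith
  intro n hn
  induction n with
  | zero => omega
  | succ m ih =>
    rcases Nat.eq_or_lt_of_le hn with h | h
    · -- m + 1 = 1
      have hm : m = 0 := by omega
      subst hm
      have h2 : Φnl 1 / (Φapp 1 + Φnoi 1) ≤ γ := hγ ▸ le_max_right _ _
      rw [div_le_iff₀ hpos1] at h2
      linarith
    · have hm : 1 ≤ m := by omega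
      have ih' := ih hm
      have hS : Φapp m + Φnoi m ≤ C ^ 2 * (Φapp (m+1) + Φnoi (m+1)) := by
        have := happ' m hm; have := hnoi' m hm; linarith [this]
      have hS0 : 0 ≤ Φapp (m+1) + Φnoi (m+1) := by
        have := happ (m+1) (by omega); have := hnoi (m+1) (by omega); linarith
      have h3 : Φnl (m+1) ≤ γb * ((1 + γ) * (Φapp m + Φnoi m)) := by
        have := hrec m hm; nlinarith
      calc Φnl (m+1) ≤ γb * ((1 + γ) * (Φapp m + Φnoi m)) := h3
        _ ≤ γb * ((1 + γ) * (C ^ 2 * (Φapp (m+1) + Φnoi (m+1)))) := by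
            apply mul_le_mul_of_nonneg_left _ hγb
            apply mul_le_mul_of_nonneg_left hS (by linarith)
        _ = C ^ 2 * γb * (1 + γ) * (Φapp (m+1) + Φnoi (m+1)) := by ring
        _ ≤ γ * (Φapp (m+1) + Φnoi (m+1)) := by
            apply mul_le_mul_of_nonneg_right hkey hS0
end

section
/- Let Θ(t) = t · φ̄_{2p}(t) where φ̄_p(t) = (−ln t)^{−p} for 0 < t ≤ e^{−p−1} (p > 0). Then the inverse function satisfies the asymptotics Θ⁻¹(t) = (t / φ̄_{2p}(t)) (1 + o(1)) as t ↘ 0, and consequently φ̄_p(Θ⁻¹(t)) = φ̄_p(t)(1 + o(1)) as t ↘ 0. -/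
open Filter Real

/-- asymptotics of `Θ⁻¹` for logarithmic source functions.
`φbar q t = (-log t)^(-q)` for `t > 0`, `Θ t = t * φbar (2p) t`, and `Θinv` is a local
inverse of `Θ` near `0` (taking values near `0`). -/
theorem stmt19 (p : ℝ) (hp : 0 < p) (φbar : ℝ → ℝ → ℝ) (Θinv : ℝ → ℝ)
    (hφbar : ∀ q t : ℝ, 0 < t → φbar q t = (-Real.log t) ^ (-q))
    (hΘinv : ∀ᶠ t in nhdsWithin 0 (Set.Ioi 0),
      0 < Θinv t ∧ Θinv t * φbar (2 * p) (Θinv t) = t)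
    (hΘinv_lim : Filter.Tendsto Θinv (nhdsWithin 0 (Set.Ioi 0))
      (nhdsWithin 0 (Set.Ioi 0))) :
    Filter.Tendsto (fun t => Θinv t / (t / φbar (2 * p) t))
        (nhdsWithin 0 (Set.Ioi 0)) (nhds 1) ∧
    Filter.Tendsto (fun t => φbar p (Θinv t) / φbar p t)
        (nhdsWithin 0 (Set.Ioi 0)) (nhds 1) := by
  set L := nhdsWithin (0:ℝ) (Set.Ioi 0) with hLdef
  have hpos : ∀ᶠ t in L, (0:ℝ) < t := self_mem_nhdsWithin
  have hlt : ∀ᶠ t in L, t < Real.exp (-1) := by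
    refine Filter.Eventually.filter_mono nhdsWithin_le_nhds ?_
    exact eventually_lt_nhds (by positivity)
  -- basic eventual facts
  have hev : ∀ᶠ t in L, 0 < Θinv t ∧ Θinv t < Real.exp (-1) ∧ 0 < t ∧
      t < Real.exp (-1) ∧ Θinv t * (-Real.log (Θinv t)) ^ (-(2*p)) = t := by
    filter_upwards [hΘinv, hΘinv_lim.eventually hlt, hpos, hlt] with t h1 h2 h3 h4
    refine ⟨h1.1, h2, h3, h4, ?_⟩
    have := h1.2
    rwa [hφbar (2*p) (Θinv t) h1.1] at this
  -- log of a number in (0, exp(-1)) is < -1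
  have key : ∀ s : ℝ, 0 < s → s < Real.exp (-1) → Real.log s < -1 := by
    intro s hs hs'
    calc Real.log s < Real.log (Real.exp (-1)) := Real.log_lt_log hs hs'
    _ = -1 := Real.log_exp _
  -- log(-log x)/(-log x) → 0 along L
  have hA : Tendsto (fun x : ℝ => Real.log (-Real.log x) / (-Real.log x)) L (nhds 0) := by
    have h1 : Tendsto (fun x : ℝ => -Real.log x) L atTop :=
      tendsto_neg_atBot_atTop.comp Real.tendsto_log_nhdsGT_zero
    have h2 : Tendsto (fun y : ℝ => Real.log y / y) atTop (nhds 0) := by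
      have := Real.tendsto_pow_log_div_mul_add_atTop 1 0 1 one_ne_zero
      simpa using this
    exact h2.comp h1
  -- g t := log(-log (Θinv t)) / log (Θinv t) → 0
  set g : ℝ → ℝ := fun t => Real.log (-Real.log (Θinv t)) / Real.log (Θinv t) with hgdef
  have hg : Tendsto g L (nhds 0) := by
    have := (hA.comp hΘinv_lim).neg
    rw [neg_zero] at this
    refine this.congr ?_
    intro t
    simp only [hgdef, Function.comp_apply, div_neg, neg_neg]
  -- key identity : log t = log (Θinv t) * (1 - 2p * g t) eventually
  have hid : ∀ᶠ t in L, Real.log t = Real.log (Θinv t) * (1 - 2*p * g t) := by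
    filter_upwards [hev] with t ⟨hx, hx', ht, ht', heq⟩
    have hlx : Real.log (Θinv t) < -1 := key _ hx hx'
    have hlx0 : Real.log (Θinv t) ≠ 0 := by linarith
    have hnl : (0:ℝ) < -Real.log (Θinv t) := by linarith
    have hlog := congrArg Real.log heq
    rw [Real.log_mul (ne_of_gt hx) (ne_of_gt (Real.rpow_pos_of_pos hnl _)),
      Real.log_rpow hnl] at hlog
    rw [← hlog, hgdef]
    field_simp
    ring
  -- hence log (Θinv t) / log t → 1
  have hB : Tendsto (fun t => Real.log (Θinv t) / Real.log t) L (nhds 1) := by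
    have hden : Tendsto (fun t => (1 - 2*p * g t)⁻¹) L (nhds 1) := by
      have h1 := (hg.const_mul (2*p)).const_sub 1
      rw [mul_zero, sub_zero] at h1
      have h2 := h1.inv₀ one_ne_zero
      rwa [inv_one] at h2
    refine hden.congr' ?_
    filter_upwards [hid, hev] with t h1 ⟨hx, hx', _, _, _⟩
    have hlx : Real.log (Θinv t) < -1 := key _ hx hx'
    have hlx0 : Real.log (Θinv t) ≠ 0 := by linarith
    rw [h1, div_mul_cancel_left₀ hlx0]
  -- ratio of φbar values tends to 1 for any exponent q
  have hC : ∀ q : ℝ, Tendsto (fun t => (-Real.log (Θinv t)) ^ (-q) / (-Real.log t) ^ (-q))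
      L (nhds 1) := by
    intro q
    have hcont : Tendsto (fun y : ℝ => y ^ (-q)) (nhds 1) (nhds 1) := by
      have := (Real.continuousAt_rpow_const 1 (-q) (Or.inl one_ne_zero)).tendsto
      simpa using this
    refine (hcont.comp hB).congr' ?_
    filter_upwards [hev] with t ⟨hx, hx', ht, ht', _⟩
    have hlx : Real.log (Θinv t) < -1 := key _ hx hx'
    have hlt' : Real.log t < -1 := key _ ht ht'
    have h1 : (0:ℝ) ≤ -Real.log (Θinv t) := by linarith
    have h2 : (0:ℝ) < -Real.log t := by linarith
    simp only [Function.comp]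
    rw [← Real.div_rpow h1 (le_of_lt h2), neg_div_neg_eq]
  constructor
  · -- first goal
    have := (hC (2*p)).inv₀ one_ne_zero
    rw [inv_one] at this
    refine this.congr' ?_
    filter_upwards [hev] with t ⟨hx, hx', ht, ht', heq⟩
    have hlx : Real.log (Θinv t) < -1 := key _ hx hx'
    have hlt' : Real.log t < -1 := key _ ht ht'
    have h1 : (0:ℝ) < -Real.log (Θinv t) := by linarith
    have h2 : (0:ℝ) < -Real.log t := by linarith
    have hφx : (0:ℝ) < (-Real.log (Θinv t)) ^ (-(2*p)) := Real.rpow_pos_of_pos h1 _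
    have hφt : (0:ℝ) < (-Real.log t) ^ (-(2*p)) := Real.rpow_pos_of_pos h2 _
    rw [hφbar (2*p) t ht, inv_div, div_div_eq_mul_div,
      div_eq_div_iff (ne_of_gt hφx) (ne_of_gt ht)]
    linear_combination (-((-Real.log t) ^ (-(2*p)))) * heq
  · -- second goal
    refine (hC p).congr' ?_
    filter_upwards [hev] with t ⟨hx, _, ht, _, _⟩
    rw [hφbar p (Θinv t) hx, hφbar p t ht]
end
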